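/- arXiv:0812.3496 — 8 statements merged into one kernel-verified Lean document; each statement's English description precedes it below -/
import Mathlib

section
/- In the max-plus semiring R_max = (R ∪ {-∞}, max, +), if X is a finite set of vectors in R_max^n, and y, z are non-zero vectors in R_max^n that are not scalar multiples of each other, with y ∉ span(X), z ∉ span(X), and y ∈ span(X ∪ {z}), then z ∉ span(X ∪ {y}). -/
open scoped Classical

noncomputable section

/-- The max-plus linear span of a finite set of vectors in `R_max^n`,
where `R_max = (ℝ ∪ {-∞}, max, +)` is modelled by `WithBot ℝ` with `⊔` as
addition and `+` as multiplication. -/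
def mpSpan {n : ℕ} (X : Finset (Fin n → WithBot ℝ)) : Set (Fin n → WithBot ℝ) :=
  {v | ∃ c : (Fin n → WithBot ℝ) → WithBot ℝ, v = fun i => X.sup fun x => c x + x i}

/-!
Write `y = (a + z) ⊔ s` and `z = (b + y) ⊔ t` with `s, t` in the span of `X`. Substituting the
second into the first gives `y = ((a + b) + y) ⊔ w` with `w = (a + t) ⊔ s` again in the span.
If `a + b ≥ 0` then `y ≤ (a + b) + y ≤ a + z ≤ y`, so `y` is proportional to `z`; if `a + b < 0`
the term `(a + b) + y` is strictly below `y` wherever `y` is finite, so `y = w` lies in the span.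
-/

theorem WithBot.eq_of_eq_add_sup_of_neg {α : Type*} [AddCommMonoid α] [LinearOrder α]
    [IsOrderedCancelAddMonoid α] {μ a b : WithBot α} (hμ : μ < 0) (h : a = (μ + a) ⊔ b) :
    a = b := by
  induction a using WithBot.recBotCoe with
  | bot => exact (le_bot_iff.mp (h ▸ le_sup_right)).symm
  | coe r =>
    have hlt : μ + r < r := by
      simpa using WithBot.add_lt_add_right (WithBot.coe_ne_bot (a := r)) hμ
    rcases le_total (μ + r) b with hle | hle
    · rwa [sup_eq_right.mpr hle] at h
    · exact absurd (h.trans (sup_eq_left.mpr hle)).symm hlt.ne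

section mpSpan

variable {n : ℕ} {X : Finset (Fin n → WithBot ℝ)}

theorem exists_add_sup_of_mem_mpSpan_insert {u v : Fin n → WithBot ℝ}
    (hv : v ∈ mpSpan (insert u X)) :
    ∃ a : WithBot ℝ, ∃ s ∈ mpSpan X, v = (fun i => a + u i) ⊔ s := by
  obtain ⟨c, rfl⟩ := hv
  exact ⟨c u, _, ⟨c, rfl⟩, funext fun i => by simp only [Finset.sup_insert, Pi.sup_apply]⟩

theorem add_mem_mpSpan {s : Fin n → WithBot ℝ} (hs : s ∈ mpSpan X) (a : WithBot ℝ) :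
    (fun i => a + s i) ∈ mpSpan X := by
  obtain ⟨c, rfl⟩ := hs
  refine ⟨fun x => a + c x, funext fun i => ?_⟩
  simp only [add_assoc]
  exact Finset.apply_sup_eq_sup_comp (a + ·) (fun _ _ => add_max _ _ _) (WithBot.add_bot a)

theorem sup_mem_mpSpan {s t : Fin n → WithBot ℝ} (hs : s ∈ mpSpan X) (ht : t ∈ mpSpan X) :
    s ⊔ t ∈ mpSpan X := by
  obtain ⟨c, rfl⟩ := hs
  obtain ⟨d, rfl⟩ := ht
  refine ⟨c ⊔ d, funext fun i => ?_⟩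
  simp only [Pi.sup_apply, max_add, ← Finset.sup_sup]
  rfl

end mpSpan

theorem maxPlus_antiExchange_general {n : ℕ} (X : Finset (Fin n → WithBot ℝ))
    (y z : Fin n → WithBot ℝ)
    (hyz : ¬ ∃ lam : WithBot ℝ, y = fun i => lam + z i)
    (hyX : y ∉ mpSpan X)
    (hmem : y ∈ mpSpan (insert z X)) :
    z ∉ mpSpan (insert y X) := by
  intro hzmem
  obtain ⟨a, s, hs, hy⟩ := exists_add_sup_of_mem_mpSpan_insert hmem
  obtain ⟨b, t, ht, hz⟩ := exists_add_sup_of_mem_mpSpan_insert hzmem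
  by_cases hab : 0 ≤ a + b
  · refine hyz ⟨a, funext fun i => le_antisymm ?_ (by rw [hy]; exact le_sup_left)⟩
    calc y i ≤ (a + b) + y i := le_add_of_nonneg_left hab
      _ = a + (b + y i) := add_assoc a b (y i)
      _ ≤ a + z i := add_le_add_right (show b + y i ≤ z i by rw [hz]; exact le_sup_left) a
  · have hyw : y = (fun i => a + t i) ⊔ s := funext fun i =>
      WithBot.eq_of_eq_add_sup_of_neg (not_le.mp hab) <| by
        conv_lhs => rw [hy, Pi.sup_apply, hz]
        simp only [Pi.sup_apply, add_max, add_assoc, sup_assoc]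
    exact hyX (hyw ▸ sup_mem_mpSpan (add_mem_mpSpan ht a) hs)

/-- Anti-exchange axiom for max-plus linear spans. -/
theorem maxPlus_antiExchange {n : ℕ} (X : Finset (Fin n → WithBot ℝ))
    (y z : Fin n → WithBot ℝ)
    (hy : y ≠ fun _ => (⊥ : WithBot ℝ)) (hz : z ≠ fun _ => (⊥ : WithBot ℝ))
    (hyz : ¬ ∃ lam : WithBot ℝ, y = fun i => lam + z i)
    (hzy : ¬ ∃ lam : WithBot ℝ, z = fun i => lam + y i)
    (hyX : y ∉ mpSpan X) (hzX : z ∉ mpSpan X)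
    (hmem : y ∈ mpSpan (insert z X)) :
    z ∉ mpSpan (insert y X) :=
  maxPlus_antiExchange_general X y z hyz hyX hmem
end
end

section
/- Let P⁺, P⁻, Q⁺, Q⁻ be positive polynomial expressions in variables x_1,...,x_m such that the identity P⁺ + Q⁻ = P⁻ + Q⁺ holds in all commutative rings, and such that no monomial appears (with nonzero coefficient) simultaneously in Q⁺ and Q⁻ when interpreted in N[x_1,...,x_m]. Then there exists a positive polynomial expression R such that the identities P⁺ = Q⁺ + R and P⁻ = Q⁻ + R hold in all commutative semirings. -/
/-!
Evaluating the ring identity at the generic point `X` of `ℤ[x]` and using that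
`ℕ[x] → ℤ[x]` is injective gives `P⁺ + Q⁻ = P⁻ + Q⁺` in `ℕ[x]`. At each monomial one of
`Q⁺`, `Q⁻` has coefficient zero, so `R` can be read off coefficientwise: it agrees with `P⁺`
where `Q⁺` vanishes and with `P⁻` elsewhere. No subtraction is needed, so this works over any
additive commutative monoid of coefficients.
-/

theorem Finsupp.exists_eq_add_of_add_eq_add {α M : Type*} [AddCommMonoid M]
    {p p' q q' : α →₀ M} (h : p + q' = p' + q) (hdisj : ∀ a, q a = 0 ∨ q' a = 0) :
    ∃ r, p = q + r ∧ p' = q' + r := by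
  classical
  refine ⟨p.filter (q · = 0) + p'.filter (q · ≠ 0), ?_, ?_⟩ <;> ext a <;>
    have ha : p a + q' a = p' a + q a := DFunLike.congr_fun h a <;>
    by_cases hq : q a = 0
  all_goals
    try have hq' := (hdisj a).resolve_left hq
    simp_all [add_comm]

namespace MvPolynomial

theorem exists_eq_add_of_add_eq_add {σ R : Type*} [CommSemiring R]
    {p p' q q' : MvPolynomial σ R} (h : p + q' = p' + q)
    (hdisj : ∀ d, q.coeff d = 0 ∨ q'.coeff d = 0) :
    ∃ r, p = q + r ∧ p' = q' + r := by
  let e : MvPolynomial σ R ≃+ ((σ →₀ ℕ) →₀ R) := AddMonoidAlgebra.coeffAddEquiv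
  obtain ⟨r, hp, hp'⟩ := Finsupp.exists_eq_add_of_add_eq_add (p := e p) (p' := e p')
    (q := e q) (q' := e q') (by rw [← map_add, ← map_add, h]) hdisj
  exact ⟨e.symm r, e.injective (by rwa [map_add, e.apply_symm_apply]),
    e.injective (by rwa [map_add, e.apply_symm_apply])⟩

theorem eq_of_forall_commRing_eval₂_eq {σ : Type} {p q : MvPolynomial σ ℕ}
    (h : ∀ (R : Type) [CommRing R] (f : σ → R),
      eval₂ (Nat.castRingHom R) f p = eval₂ (Nat.castRingHom R) f q) :
    p = q := by
  apply map_injective (Nat.castRingHom ℤ) Nat.cast_injective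
  simp only [map_eq_eval₂Hom_C_comp, coe_eval₂Hom]
  rw [Subsingleton.elim (C.comp _) (Nat.castRingHom _)]
  exact h _ X

end MvPolynomial

/-- **Strong transfer principle.** Positive polynomial expressions are modelled as
multivariate polynomials with coefficients in `ℕ`. If `P⁺ + Q⁻ = P⁻ + Q⁺` holds under
every substitution in every commutative ring, and no monomial appears (with nonzero
coefficient) simultaneously in `Q⁺` and `Q⁻`, then there is a positive polynomial
expression `R` such that `P⁺ = Q⁺ + R` and `P⁻ = Q⁻ + R` hold under every substitution
in every commutative semiring. -/
theorem strong_transfer_principle {m : ℕ}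
    (Pp Pm Qp Qm : MvPolynomial (Fin m) ℕ)
    (hring : ∀ (R : Type) [CommRing R] (f : Fin m → R),
      MvPolynomial.eval₂ (Nat.castRingHom R) f Pp + MvPolynomial.eval₂ (Nat.castRingHom R) f Qm =
      MvPolynomial.eval₂ (Nat.castRingHom R) f Pm + MvPolynomial.eval₂ (Nat.castRingHom R) f Qp)
    (hdisj : ∀ d : (Fin m) →₀ ℕ, Qp.coeff d = 0 ∨ Qm.coeff d = 0) :
    ∃ R : MvPolynomial (Fin m) ℕ,
      ∀ (S : Type) [CommSemiring S] (f : Fin m → S),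
        MvPolynomial.eval₂ (Nat.castRingHom S) f Pp =
          MvPolynomial.eval₂ (Nat.castRingHom S) f Qp + MvPolynomial.eval₂ (Nat.castRingHom S) f R ∧
        MvPolynomial.eval₂ (Nat.castRingHom S) f Pm =
          MvPolynomial.eval₂ (Nat.castRingHom S) f Qm + MvPolynomial.eval₂ (Nat.castRingHom S) f R := by
  have hpoly : Pp + Qm = Pm + Qp :=
    MvPolynomial.eq_of_forall_commRing_eval₂_eq fun R _ f => by
      simpa only [MvPolynomial.eval₂_add] using hring R f
  obtain ⟨R, hp, hm⟩ := MvPolynomial.exists_eq_add_of_add_eq_add hpoly hdisj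
  exact ⟨R, fun S _ f => ⟨by rw [hp, MvPolynomial.eval₂_add], by rw [hm, MvPolynomial.eval₂_add]⟩⟩
end

section
/- For n×n matrices A, B over any commutative semiring S, the identity |AB|⁺ + |A|⁺|B|⁻ + |A|⁻|B|⁺ = |AB|⁻ + |A|⁺|B|⁺ + |A|⁻|B|⁻ holds, where |M|⁺ = Σ_{σ ∈ A_n} m_{1σ(1)}···m_{nσ(n)} is the positive determinant (sum over even permutations) and |M|⁻ is the sum over odd permutations. -/
open scoped Classical

noncomputable section

/-- Positive part of the bideterminant: sum over even permutations. -/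
def detp {S : Type*} [CommSemiring S] {n : ℕ} (A : Matrix (Fin n) (Fin n) S) : S :=
  ∑ σ ∈ Finset.univ.filter (fun σ : Equiv.Perm (Fin n) => Equiv.Perm.sign σ = 1),
    ∏ i, A i (σ i)

/-- Negative part of the bideterminant: sum over odd permutations. -/
def detm {S : Type*} [CommSemiring S] {n : ℕ} (A : Matrix (Fin n) (Fin n) S) : S :=
  ∑ σ ∈ Finset.univ.filter (fun σ : Equiv.Perm (Fin n) => Equiv.Perm.sign σ = -1),
    ∏ i, A i (σ i)

/-!
Over a commutative ring the identity is `det (A * B) = det A * det B` with `det = detp - detm`,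
every term moved to the side where it appears with a plus sign. Both sides are polynomials with
natural coefficients in the entries of `A` and `B`, and `ℕ[X] → ℤ[X]` is injective, so the
identity holds for generic matrices over `ℕ[X]`; specialising the variables gives it over any
commutative semiring.
-/

open Equiv.Perm

section

variable {S T R : Type*} [CommSemiring S] [CommSemiring T] [CommRing R] {n : ℕ}

lemma detp_eq_sum_ofSign (M : Matrix (Fin n) (Fin n) S) :
    detp M = ∑ σ ∈ ofSign 1, ∏ i, M i (σ i) := rfl

lemma detm_eq_sum_ofSign (M : Matrix (Fin n) (Fin n) S) :
    detm M = ∑ σ ∈ ofSign (-1), ∏ i, M i (σ i) := rfl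

lemma detp_map (f : S →+* T) (M : Matrix (Fin n) (Fin n) S) : detp (M.map f) = f (detp M) := by
  simp [detp, map_sum, map_prod]

lemma detm_map (f : S →+* T) (M : Matrix (Fin n) (Fin n) S) : detm (M.map f) = f (detm M) := by
  simp [detm, map_sum, map_prod]

lemma det_eq_detp_sub_detm (M : Matrix (Fin n) (Fin n) R) : M.det = detp M - detm M := by
  rw [← Matrix.det_transpose, Matrix.det_apply, ← ofSign_disjUnion, Finset.sum_disjUnion,
    detp_eq_sum_ofSign, detm_eq_sum_ofSign, sub_eq_add_neg, ← Finset.sum_neg_distrib]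
  congr 1 <;> refine Finset.sum_congr rfl fun σ hσ => ?_ <;> simp [mem_ofSign.mp hσ]

theorem bideterminant_mul_weak_of_commRing (A B : Matrix (Fin n) (Fin n) R) :
    detp (A * B) + detp A * detm B + detm A * detp B =
      detm (A * B) + detp A * detp B + detm A * detm B := by
  linear_combination -det_eq_detp_sub_detm (A * B) + Matrix.det_mul A B +
    B.det * det_eq_detp_sub_detm A + (detp A - detm A) * det_eq_detp_sub_detm B

theorem bideterminant_mul_weak_of_injective (f : S →+* R) (hf : Function.Injective f)
    (A B : Matrix (Fin n) (Fin n) S) :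
    detp (A * B) + detp A * detm B + detm A * detp B =
      detm (A * B) + detp A * detp B + detm A * detm B := by
  apply hf
  simpa only [map_add, map_mul, ← detp_map, ← detm_map, Matrix.map_mul] using
    bideterminant_mul_weak_of_commRing (A.map f) (B.map f)

end

/-- Weak multiplicativity of the bideterminant over any commutative semiring. -/
theorem bideterminant_mul_weak {S : Type*} [CommSemiring S] {n : ℕ}
    (A B : Matrix (Fin n) (Fin n) S) :
    detp (A * B) + detp A * detm B + detm A * detp B =
      detm (A * B) + detp A * detp B + detm A * detm B := by
  let X : Matrix (Fin n) (Fin n) (MvPolynomial (Fin n × Fin n ⊕ Fin n × Fin n) ℕ) :=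
    .of fun i j => .X (.inl (i, j))
  let Y : Matrix (Fin n) (Fin n) (MvPolynomial (Fin n × Fin n ⊕ Fin n × Fin n) ℕ) :=
    .of fun i j => .X (.inr (i, j))
  let φ := (MvPolynomial.aeval (R := ℕ) <|
    Sum.elim (fun p : Fin n × Fin n => A p.1 p.2) fun p : Fin n × Fin n => B p.1 p.2).toRingHom
  have hX : X.map φ = A := by ext; simp [X, φ]
  have hY : Y.map φ = B := by ext; simp [Y, φ]
  have generic := congrArg φ <| bideterminant_mul_weak_of_injective
    (MvPolynomial.map (Nat.castRingHom ℤ)) (MvPolynomial.map_injective _ Nat.cast_injective) X Y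
  simpa only [map_add, map_mul, ← detp_map, ← detm_map, Matrix.map_mul, hX, hY] using generic
end
end

section
/- For n×n matrices A, B over any commutative semiring S, there exists an element s ∈ S such that |AB|⁺ = |A|⁺|B|⁺ + |A|⁻|B|⁻ + s and |AB|⁻ = |A|⁺|B|⁻ + |A|⁻|B|⁺ + s. -/
/-!
Expanding the products `∏ i, (A * B) i (σ i)` writes `(A * B).detp s` as a sum, over all maps
`f : ι → ι`, of `∑ σ ∈ ofSign s, ∏ i, A i (f i) * B (f i) (σ i)`. If `f i = f j` with `i ≠ j`, then
`σ ↦ σ * swap i j` is a sign-reversing bijection preserving these products, so the non-injective `f`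
contribute one and the same amount to both signs. If `f` is a permutation `τ`, reindexing by
`σ ↦ σ * τ⁻¹` factors its term as `(∏ i, A i (τ i)) * B.detp (s * sign τ)`.
-/

open scoped Classical

noncomputable section

open Finset Equiv Equiv.Perm

namespace Matrix

variable {S ι : Type*} [CommSemiring S] [Fintype ι] [DecidableEq ι]

def detpMulTerm (s : ℤˣ) (A B : Matrix ι ι S) (f : ι → ι) : S :=
  ∑ σ ∈ ofSign s, ∏ i, A i (f i) * B (f i) (σ i)

lemma detp_mul_eq_sum_detpMulTerm (s : ℤˣ) (A B : Matrix ι ι S) :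
    (A * B).detp s = ∑ f : ι → ι, detpMulTerm s A B f := by
  simp only [detp, detpMulTerm, mul_apply, prod_univ_sum, Fintype.piFinset_univ]
  exact sum_comm

lemma detpMulTerm_neg_of_not_injective (s : ℤˣ) (A B : Matrix ι ι S) {f : ι → ι}
    (hf : ¬ Function.Injective f) : detpMulTerm (-s) A B f = detpMulTerm s A B f := by
  obtain ⟨i, j, hfij, hij⟩ := Function.not_injective_iff.mp hf
  have hsign (σ : Perm ι) : sign (σ * Equiv.swap i j) = - sign σ := by simp [sign_swap hij]
  refine sum_nbij' (· * Equiv.swap i j) (· * Equiv.swap i j) (fun σ hσ => ?_) (fun σ hσ => ?_)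
    (fun σ _ => by simp [mul_assoc]) (fun σ _ => by simp [mul_assoc]) (fun σ _ => ?_)
  · simp_all
  · simp_all
  · simp only [prod_mul_distrib]
    congr 1
    exact Fintype.prod_equiv (Equiv.swap i j) _ _ fun k => by simp [apply_swap_eq_self hfij]

lemma detpMulTerm_perm (s : ℤˣ) (A B : Matrix ι ι S) (τ : Perm ι) :
    detpMulTerm s A B τ = (∏ i, A i (τ i)) * B.detp (s * sign τ) := by
  simp only [detpMulTerm, detp, prod_mul_distrib, ← mul_sum]
  congr 1
  refine sum_nbij' (· * τ⁻¹) (· * τ) (fun σ hσ => ?_) (fun σ hσ => ?_)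
    (fun σ _ => by simp) (fun σ _ => by simp) (fun σ _ => ?_)
  · simp_all
  · simp_all [mul_assoc, Int.units_mul_self]
  · exact Fintype.prod_equiv τ _ _ fun k => by simp

lemma sum_detpMulTerm_injective (s : ℤˣ) (A B : Matrix ι ι S) :
    ∑ f with Function.Injective f, detpMulTerm s A B f =
      A.detp 1 * B.detp s + A.detp (-1) * B.detp (-s) := by
  have hperm : ∑ f with Function.Injective f, detpMulTerm s A B f =
      ∑ τ : Perm ι, detpMulTerm s A B τ :=
    sum_bij' (fun f hf => ofBijective f (mem_filter.1 hf).2.bijective_of_finite)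
      (fun τ _ => τ) (fun _ _ => mem_univ _) (fun τ _ => by simpa using τ.injective)
      (fun _ _ => rfl) (fun _ _ => Equiv.ext fun _ => rfl) (fun _ _ => rfl)
  rw [hperm, ← ofSign_disjUnion (α := ι), sum_disjUnion]
  congr 1 <;> rw [detp, sum_mul] <;> refine sum_congr rfl fun τ hτ => ?_ <;>
    simp_all [detpMulTerm_perm]

lemma detp_mul_eq_add_sum_not_injective (s : ℤˣ) (A B : Matrix ι ι S) :
    (A * B).detp s = A.detp 1 * B.detp s + A.detp (-1) * B.detp (-s) +
      ∑ f with ¬ Function.Injective f, detpMulTerm s A B f := by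
  rw [detp_mul_eq_sum_detpMulTerm, ← sum_filter_add_sum_filter_not _ Function.Injective,
    sum_detpMulTerm_injective]

theorem exists_detp_mul_eq (A B : Matrix ι ι S) :
    ∃ c : S,
      (A * B).detp 1 = A.detp 1 * B.detp 1 + A.detp (-1) * B.detp (-1) + c ∧
      (A * B).detp (-1) = A.detp 1 * B.detp (-1) + A.detp (-1) * B.detp 1 + c := by
  have hc : ∑ f with ¬ Function.Injective f, detpMulTerm (-1) A B f =
      ∑ f with ¬ Function.Injective f, detpMulTerm 1 A B f :=
    sum_congr rfl fun f hf => detpMulTerm_neg_of_not_injective 1 A B (mem_filter.1 hf).2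
  refine ⟨∑ f with ¬ Function.Injective f, detpMulTerm 1 A B f, ?_, ?_⟩
  · exact detp_mul_eq_add_sum_not_injective 1 A B
  · simpa only [neg_neg, hc] using detp_mul_eq_add_sum_not_injective (-1) A B

end Matrix

/-- Strong multiplicativity of the bideterminant over any commutative semiring. -/
theorem bideterminant_mul_strong {S : Type*} [CommSemiring S] {n : ℕ}
    (A B : Matrix (Fin n) (Fin n) S) :
    ∃ s : S,
      detp (A * B) = detp A * detp B + detm A * detm B + s ∧
      detm (A * B) = detp A * detm B + detm A * detp B + s :=
  Matrix.exists_detp_mul_eq A B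
end
end

section
/- In any commutative semiring, the semiring Amitsur–Levitzki identity holds for n×n matrices: for any 2n matrices X_1,...,X_{2n}, Σ_{σ ∈ A_{2n}} X_{σ(1)}···X_{σ(2n)} = Σ_{σ ∈ S_{2n} \ A_{2n}} X_{σ(1)}···X_{σ(2n)}, where A_{2n} is the alternating group. -/
/-!
Rosset's proof. Over a `ℚ`-algebra `R`, let `A = ∑ₖ Xₖ eₖ`, a matrix over the exterior algebra
on generators `e₀, …, e_{m-1}`. Expanding,
`A ^ m = (∑_σ sign σ • X_{σ 0} ⋯ X_{σ (m-1)}) e₀ ⋯ e_{m-1}`,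
so it suffices to show `A ^ (2n) = 0` for `n × n` matrices. The entries of `B = A²` are even,
hence central, so `B` is a matrix over a commutative `ℚ`-algebra. Rotating a word of even length
keeps the trace of the matrix product and flips the sign of the exterior product, so `tr Bᵏ = 0`
for `k ≥ 1`; Newton's identities, in the form `d/dt det (1 - tB) = -tr (adj (1 - tB) B)`, then
force `det (1 - tB) = 1`, i.e. `charpoly B = tⁿ`, and `Bⁿ = 0` by Cayley–Hamilton.

The semiring statement is the ring identity for generic matrices over `ℚ[x_{kij}]`, which already
lives in `ℕ[x_{kij}]` and specializes to any commutative semiring.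
-/

theorem Fintype.sum_pow_eq_sum_prod_ofFn {A κ : Type*} [Semiring A] [Fintype κ] (f : κ → A)
    (L : ℕ) : (∑ k, f k) ^ L = ∑ w : Fin L → κ, (List.ofFn fun i => f (w i)).prod := by
  induction L with
  | zero => simp
  | succ L ih =>
    rw [pow_succ', ih, Finset.sum_mul_sum, ← (Fin.consEquiv fun _ => κ).sum_comp,
      Fintype.sum_prod_type]
    simp [Fin.consEquiv, List.ofFn_succ]

theorem Fintype.sum_eq_sum_perm_of_not_injective {α M : Type*} [Fintype α] [DecidableEq α]
    [AddCommMonoid M] (f : (α → α) → M) (hf : ∀ w, ¬ Function.Injective w → f w = 0) :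
    ∑ w, f w = ∑ σ : Equiv.Perm α, f σ := by
  calc ∑ w, f w = ∑ w ∈ Finset.univ.map ⟨_, DFunLike.coe_injective⟩, f w := by
        refine (Finset.sum_subset (Finset.subset_univ _) fun w _ hw => hf w fun hinj => hw ?_).symm
        exact Finset.mem_map.mpr ⟨Equiv.ofBijective w (Finite.injective_iff_bijective.mp hinj),
          Finset.mem_univ _, rfl⟩
    _ = ∑ σ : Equiv.Perm α, f σ := Finset.sum_map _ _ _

theorem Equiv.Perm.sum_sign_smul_eq_sub {α M : Type*} [Fintype α] [DecidableEq α]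
    [AddCommGroup M] (f : Equiv.Perm α → M) :
    ∑ σ, Equiv.Perm.sign σ • f σ
      = ∑ σ ∈ Finset.univ.filter (fun σ => Equiv.Perm.sign σ = 1), f σ
        - ∑ σ ∈ Finset.univ.filter (fun σ => Equiv.Perm.sign σ = -1), f σ := by
  rw [← Finset.sum_filter_add_sum_filter_not Finset.univ (fun σ => Equiv.Perm.sign σ = 1),
    sub_eq_add_neg, ← Finset.sum_neg_distrib]
  have hodd : Finset.univ.filter (fun σ : Equiv.Perm α => ¬ Equiv.Perm.sign σ = 1)
      = Finset.univ.filter (fun σ => Equiv.Perm.sign σ = -1) :=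
    Finset.filter_congr fun σ _ => Int.units_ne_iff_eq_neg
  rw [hodd]
  congr 1 <;> refine Finset.sum_congr rfl fun σ hσ => ?_ <;> rw [(Finset.mem_filter.mp hσ).2]
  · exact one_smul _ _
  · exact Units.neg_smul _ _ |>.trans (congrArg _ (one_smul _ _))

namespace Matrix

section Newton

open Polynomial

variable {ι R : Type*} [Fintype ι] [DecidableEq ι] [CommRing R]

theorem derivative_det (A : Matrix ι ι R[X]) :
    derivative A.det = trace (adjugate A * A.map derivative) := by
  have hterm : ∀ σ : Equiv.Perm ι, derivative (∏ i, A (σ i) i)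
      = ∑ j, ∏ i, (A.updateCol j fun i => derivative (A i j)) (σ i) i := by
    intro σ
    rw [derivative_prod_finset]
    refine Finset.sum_congr rfl fun j _ => ?_
    have : (fun i => (A.updateCol j fun i => derivative (A i j)) (σ i) i)
        = Function.update (fun i => A (σ i) i) j (derivative (A (σ j) j)) := by
      funext i
      by_cases h : i = j
      · subst h; simp
      · simp [h]
    rw [this, Finset.prod_update_of_mem (Finset.mem_univ j), Finset.sdiff_singleton_eq_erase,
      mul_comm]
  calc derivative A.det
      = ∑ j, (A.updateCol j fun i => derivative (A i j)).det := by
        simp only [det_apply, map_sum, Units.smul_def, map_zsmul, hterm, Finset.smul_sum]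
        exact Finset.sum_comm
    _ = ∑ j, ∑ i, adjugate A j i * derivative (A i j) := by
        refine Finset.sum_congr rfl fun j _ => ?_
        rw [← cramer_apply, cramer_eq_adjugate_mulVec]
        rfl
    _ = trace (adjugate A * A.map derivative) := by
        simp [trace, mul_apply]

theorem derivative_charpolyRev (M : Matrix ι ι R) :
    derivative M.charpolyRev = -trace (adjugate (1 - (X : R[X]) • M.map C) * M.map C) := by
  have : (1 - (X : R[X]) • M.map C).map derivative = -M.map C := by
    ext i j
    by_cases h : i = j <;> simp [h]
  rw [charpolyRev, derivative_det, this, mul_neg, trace_neg]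

theorem charpolyRev_eq_one_of_trace_pow_eq_zero [IsAddTorsionFree R] (M : Matrix ι ι R)
    (h : ∀ k, 1 ≤ k → k ≤ Fintype.card ι → trace (M ^ k) = 0) : M.charpolyRev = 1 := by
  nontriviality R
  set N := Fintype.card ι
  set Y : Matrix ι ι R[X] := (X : R[X]) • M.map C
  set S : Matrix ι ι R[X] := ∑ i ∈ Finset.range N, Y ^ i
  have hpow : ∀ k, (M.map C) ^ k = (M ^ k).map C := fun k => by
    simpa using (map_pow (C.mapMatrix (m := ι)) M k).symm
  -- `S` truncates the inverse `∑ Yⁱ` of `1 - Y`, so `adj (1 - Y) = M.charpolyRev • S` up to `Y ^ N`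
  have hadj : adjugate (1 - Y) = M.charpolyRev • S + adjugate (1 - Y) * Y ^ N := by
    have := congrArg (adjugate (1 - Y) * ·) (mul_neg_geom_sum Y N)
    rw [← mul_assoc, adjugate_mul, smul_mul, one_mul, mul_sub, mul_one] at this
    rw [show M.charpolyRev = (1 - Y).det from rfl, this, sub_add_cancel]
  have htraceS : trace (S * M.map C) = 0 := by
    rw [Finset.sum_mul, trace_sum]
    refine Finset.sum_eq_zero fun i hi => ?_
    rw [_root_.smul_pow, smul_mul_assoc, ← pow_succ, trace_smul, hpow, ← AddMonoidHom.map_trace,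
      h (i + 1) (by omega) (Finset.mem_range.mp hi), map_zero, smul_zero]
  have hdvd : X ^ N ∣ derivative M.charpolyRev := by
    rw [derivative_charpolyRev, hadj, add_mul, trace_add, smul_mul_assoc, trace_smul, htraceS,
      smul_zero, zero_add, _root_.smul_pow, mul_smul_comm, smul_mul_assoc, trace_smul, smul_eq_mul]
    exact (dvd_mul_right _ _).neg_right
  have hdeg : M.charpolyRev.natDegree ≤ N :=
    M.reverse_charpoly ▸ (reverse_natDegree_le _).trans (charpoly_natDegree_eq_dim M).le
  have hderiv : derivative M.charpolyRev = 0 := by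
    ext j
    rw [coeff_zero]
    rcases lt_or_ge j N with hj | hj
    · exact X_pow_dvd_iff.mp hdvd j hj
    · rw [coeff_derivative, coeff_eq_zero_of_natDegree_lt (by omega), zero_mul]
  rw [eq_C_of_derivative_eq_zero hderiv, coeff_zero_eq_eval_zero, eval_charpolyRev, map_one]

theorem pow_card_eq_zero_of_trace_pow_eq_zero [IsAddTorsionFree R] (M : Matrix ι ι R)
    (h : ∀ k, 1 ≤ k → k ≤ Fintype.card ι → trace (M ^ k) = 0) : M ^ Fintype.card ι = 0 := by
  nontriviality R
  have hcharpoly : M.charpoly = X ^ Fintype.card ι := by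
    conv_lhs => rw [← reflect_reflect (N := M.charpoly.natDegree) (p := M.charpoly)]
    rw [← reverse, reverse_charpoly, charpolyRev_eq_one_of_trace_pow_eq_zero M h, reflect_one,
      charpoly_natDegree_eq_dim]
  simpa [hcharpoly] using M.aeval_self_charpoly

end Newton

section MapSMul

variable {ι R A : Type*} [Fintype ι] [CommSemiring R] [Semiring A] [Algebra R A]

theorem map_smul_mul_map_smul {l n : Type*} (M : Matrix l ι R) (N : Matrix ι n R) (a b : A) :
    M.map (· • a) * N.map (· • b) = (M * N).map (· • (a * b)) := by
  ext i j
  simp only [mul_apply, map_apply, Finset.sum_smul, smul_mul_smul_comm]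

theorem trace_map_smul (M : Matrix ι ι R) (a : A) : trace (M.map (· • a)) = trace M • a := by
  simp [trace, Finset.sum_smul]

theorem prod_ofFn_map_smul [DecidableEq ι] {L : ℕ} (X : Fin L → Matrix ι ι R) (a : Fin L → A) :
    (List.ofFn fun i => (X i).map (· • a i)).prod
      = (List.ofFn X).prod.map (· • (List.ofFn a).prod) := by
  induction L with
  | zero => ext i j; by_cases h : i = j <;> simp [h]
  | succ L ih => simp only [List.ofFn_succ, List.prod_cons, ih, map_smul_mul_map_smul]

theorem trace_prod_ofFn_comp_finRotate [DecidableEq ι] {L : ℕ}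
    (X : Fin (L + 1) → Matrix ι ι R) :
    trace (List.ofFn (X ∘ finRotate (L + 1))).prod = trace (List.ofFn X).prod := by
  rw [List.ofFn_succ', List.ofFn_succ, List.prod_concat, List.prod_cons, trace_mul_comm]
  simp [Fin.coeSucc_eq_succ]

end MapSMul

theorem map_sum_prod_ofFn {n R S : Type*} [Fintype n] [DecidableEq n] [Semiring R]
    [Semiring S] {m : ℕ} (f : R →+* S) (X : Fin m → Matrix n n R)
    (s : Finset (Equiv.Perm (Fin m))) :
    (∑ σ ∈ s, (List.ofFn fun i => X (σ i)).prod).map f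
      = ∑ σ ∈ s, (List.ofFn fun i => (X (σ i)).map f).prod := by
  simp [← RingHom.mapMatrix_apply, map_list_prod, List.map_ofFn, Function.comp_def]

end Matrix

namespace ExteriorAlgebra

variable {R M : Type*} [CommRing R] [AddCommGroup M] [Module R M]

theorem ι_mul_ι_mem_center (x y : M) :
    ι R x * ι R y ∈ Subalgebra.center R (ExteriorAlgebra R M) := by
  have anticomm (a b : M) : ι R a * ι R b = -(ι R b * ι R a) :=
    eq_neg_of_add_eq_zero_left (ι_add_mul_swap a b)
  rw [Subalgebra.mem_center_iff]
  intro g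
  induction g using ExteriorAlgebra.induction with
  | algebraMap r => exact Algebra.commutes r _
  | ι z => rw [← mul_assoc, anticomm z x, neg_mul, mul_assoc, anticomm z y, mul_neg, neg_neg,
      ← mul_assoc, mul_assoc]
  | mul a b ha hb => rw [mul_assoc, hb, ← mul_assoc, ha, mul_assoc]
  | add a b ha hb => rw [add_mul, mul_add, ha, hb]

theorem smul_ιMulti_basis_eq_zero_iff {m : ℕ} (b : Module.Basis (Fin m) R M) (r : R) :
    r • ιMulti R m b = 0 ↔ r = 0 := by
  refine ⟨fun h => ?_, fun h => by rw [h, zero_smul]⟩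
  have := congrArg (liftAlternating (Pi.single m b.det : ∀ i, M [⋀^Fin i]→ₗ[R] R)) h
  rwa [map_smul, liftAlternating_apply_ιMulti, Pi.single_eq_same, b.det_self, smul_eq_mul,
    mul_one, map_zero] at this

end ExteriorAlgebra

section Rosset

open Matrix ExteriorAlgebra

variable {n R : Type*} [Fintype n] [DecidableEq n] [CommRing R] {m : ℕ}

noncomputable def rossetMatrix (X : Fin m → Matrix n n R) :
    Matrix n n (ExteriorAlgebra R (Fin m → R)) :=
  ∑ k, (X k).map (· • ι R (Pi.basisFun R (Fin m) k))

theorem rossetMatrix_pow (X : Fin m → Matrix n n R) (L : ℕ) :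
    rossetMatrix X ^ L = ∑ w : Fin L → Fin m,
      (List.ofFn fun i => X (w i)).prod.map (· • ιMulti R L (Pi.basisFun R (Fin m) ∘ w)) := by
  rw [rossetMatrix, Fintype.sum_pow_eq_sum_prod_ofFn]
  refine Finset.sum_congr rfl fun w _ => ?_
  rw [prod_ofFn_map_smul, ιMulti_apply]
  rfl

theorem trace_rossetMatrix_pow_two_mul [Algebra ℚ R] (X : Fin m → Matrix n n R) {k : ℕ}
    (hk : 1 ≤ k) : trace (rossetMatrix X ^ (2 * k)) = 0 := by
  have : IsAddTorsionFree (ExteriorAlgebra R (Fin m → R)) := .of_module_rat _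
  obtain ⟨L, hL⟩ : ∃ L, 2 * k = L + 1 := ⟨2 * k - 1, by omega⟩
  have hodd : Odd L := ⟨k - 1, by omega⟩
  set T := trace (rossetMatrix X ^ (L + 1))
  have hT : T = ∑ w : Fin (L + 1) → Fin m,
      trace (List.ofFn fun i => X (w i)).prod • ιMulti R (L + 1) (Pi.basisFun R (Fin m) ∘ w) := by
    simp only [T, rossetMatrix_pow, trace_sum, trace_map_smul]
  have hneg : -T = T := by
    rw [hT, ← Finset.sum_neg_distrib]
    refine Fintype.sum_equiv ((finRotate (L + 1)).symm.arrowCongr (Equiv.refl _)) _ _ fun w => ?_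
    change _ = _ • ιMulti R (L + 1) (Pi.basisFun R (Fin m) ∘ (w ∘ finRotate (L + 1)))
    rw [← Function.comp_assoc, AlternatingMap.map_perm, sign_finRotate, Nat.add_sub_cancel,
      hodd.neg_one_pow, Units.neg_smul, one_smul, smul_neg]
    exact congrArg (fun r : R => -(r • ιMulti R (L + 1) (Pi.basisFun R (Fin m) ∘ w)))
      (trace_prod_ofFn_comp_finRotate fun i => X (w i)).symm
  rw [hL]
  exact neg_eq_self.mp hneg

theorem rossetMatrix_sq_apply_mem_center (X : Fin m → Matrix n n R) (i j : n) :
    (rossetMatrix X ^ 2) i j ∈ Subalgebra.center R (ExteriorAlgebra R (Fin m → R)) := by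
  rw [rossetMatrix_pow, Matrix.sum_apply]
  refine Subalgebra.sum_mem _ fun w _ => ?_
  rw [map_apply]
  refine Subalgebra.smul_mem _ ?_ _
  simpa [ιMulti_apply, List.ofFn_succ] using ι_mul_ι_mem_center _ _

theorem rossetMatrix_pow_two_mul_card [Algebra ℚ R] (X : Fin m → Matrix n n R) :
    rossetMatrix X ^ (2 * Fintype.card n) = 0 := by
  set Z := Subalgebra.center R (ExteriorAlgebra R (Fin m → R))
  have : IsAddTorsionFree Z := .of_module_rat _
  let B : Matrix n n Z := of fun i j => ⟨_, rossetMatrix_sq_apply_mem_center X i j⟩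
  have hB (k : ℕ) : (B ^ k).map Z.val = rossetMatrix X ^ (2 * k) := by
    rw [pow_mul, ← AlgHom.mapMatrix_apply, map_pow]
    rfl
  have htrace (k : ℕ) (hk : 1 ≤ k) (_ : k ≤ Fintype.card n) : trace (B ^ k) = 0 := by
    apply Subtype.val_injective
    have := AddMonoidHom.map_trace Z.val (B ^ k)
    rw [hB, trace_rossetMatrix_pow_two_mul X hk] at this
    exact this
  rw [← hB, pow_card_eq_zero_of_trace_pow_eq_zero B htrace, Matrix.map_zero _ (map_zero _)]

theorem rossetMatrix_pow_eq_map_smul_ιMulti (X : Fin m → Matrix n n R) :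
    rossetMatrix X ^ m = (∑ σ : Equiv.Perm (Fin m),
      Equiv.Perm.sign σ • (List.ofFn fun i => X (σ i)).prod).map
        (· • ιMulti R m (Pi.basisFun R (Fin m))) := by
  rw [rossetMatrix_pow, Fintype.sum_eq_sum_perm_of_not_injective]
  · ext i j
    rw [map_apply, Matrix.sum_apply, Matrix.sum_apply, Finset.sum_smul]
    refine Finset.sum_congr rfl fun σ _ => ?_
    rw [map_apply, Matrix.smul_apply, AlternatingMap.map_perm, smul_comm, smul_assoc]
  · intro w hw
    rw [ιMulti_eq_zero_of_not_inj fun h => hw h.of_comp]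
    ext i j
    simp

theorem sum_sign_smul_prod_ofFn_eq_zero [Algebra ℚ R] (X : Fin m → Matrix n n R)
    (hm : 2 * Fintype.card n ≤ m) :
    ∑ σ : Equiv.Perm (Fin m), Equiv.Perm.sign σ • (List.ofFn fun i => X (σ i)).prod = 0 := by
  ext i j
  rw [Matrix.zero_apply, ← smul_ιMulti_basis_eq_zero_iff (Pi.basisFun R (Fin m))]
  have := congrFun₂ (rossetMatrix_pow_eq_map_smul_ιMulti X) i j
  rwa [pow_eq_zero_of_le hm (rossetMatrix_pow_two_mul_card X), Matrix.zero_apply, map_apply,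
    eq_comm] at this

end Rosset

theorem sum_even_prod_ofFn_eq_sum_odd {n S : Type*} [Fintype n] [DecidableEq n] [CommSemiring S]
    {m : ℕ} (X : Fin m → Matrix n n S) (hm : 2 * Fintype.card n ≤ m) :
    ∑ σ ∈ Finset.univ.filter (fun σ : Equiv.Perm (Fin m) => Equiv.Perm.sign σ = 1),
        (List.ofFn fun i => X (σ i)).prod
    = ∑ σ ∈ Finset.univ.filter (fun σ : Equiv.Perm (Fin m) => Equiv.Perm.sign σ = -1),
        (List.ofFn fun i => X (σ i)).prod := by
  let G : Fin m → Matrix n n (MvPolynomial (Fin m × n × n) ℕ) :=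
    fun k => Matrix.of fun i j => MvPolynomial.X (k, i, j)
  have hG : ∑ σ ∈ Finset.univ.filter (fun σ : Equiv.Perm (Fin m) => Equiv.Perm.sign σ = 1),
        (List.ofFn fun i => G (σ i)).prod
      = ∑ σ ∈ Finset.univ.filter (fun σ : Equiv.Perm (Fin m) => Equiv.Perm.sign σ = -1),
        (List.ofFn fun i => G (σ i)).prod := by
    apply Matrix.map_injective (MvPolynomial.map_injective (Nat.castRingHom ℚ) Nat.cast_injective)
    simp only [Matrix.map_sum_prod_ofFn]
    rw [← sub_eq_zero, ← Equiv.Perm.sum_sign_smul_eq_sub]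
    exact sum_sign_smul_prod_ofFn_eq_zero
      (fun k => (G k).map (MvPolynomial.map (Nat.castRingHom ℚ))) hm
  let φ := MvPolynomial.eval₂Hom (Nat.castRingHom S) fun v : Fin m × n × n => X v.1 v.2.1 v.2.2
  have hGX (k : Fin m) : (G k).map φ = X k := by
    ext i j
    simp [G, φ]
  simpa only [Matrix.map_sum_prod_ofFn, hGX] using congrArg (·.map φ) hG

/-- Semiring form of the Amitsur–Levitzki standard identity: for any `2n` matrices of
size `n×n` over a commutative semiring, the sum of the products `X_{σ(1)}···X_{σ(2n)}`
over even permutations equals the sum over odd permutations. -/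
theorem amitsur_levitzki_semiring {S : Type*} [CommSemiring S] (n : ℕ)
    (X : Fin (2 * n) → Matrix (Fin n) (Fin n) S) :
    ∑ σ ∈ Finset.univ.filter (fun σ : Equiv.Perm (Fin (2 * n)) => Equiv.Perm.sign σ = 1),
        (List.ofFn fun i => X (σ i)).prod
    = ∑ σ ∈ Finset.univ.filter (fun σ : Equiv.Perm (Fin (2 * n)) => Equiv.Perm.sign σ = -1),
        (List.ofFn fun i => X (σ i)).prod :=
  sum_even_prod_ofFn_eq_sum_odd X (by rw [Fintype.card_fin])
end

section
/- Max-plus Radon theorem: every family of n+1 vectors in R_max^n is linearly dependent in the Gondran–Minoux sense; that is, for any v_1,...,v_{n+1} ∈ R_max^n there exist disjoint sets I, J with I ∪ J = {1,...,n+1} and scalars α_1,...,α_{n+1} ∈ R_max not all equal to -∞ such that ⊕_{i∈I} α_i ⊙ v_i = ⊕_{j∈J} α_j ⊙ v_j (equality of vectors in R_max^n, entrywise max-plus combinations). -/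
/-!
Write the vectors as the columns of an `n × (n+1)` matrix `A` and perturb its entries
lexicographically so that, for every column `k`, the optimal assignment of the `n` rows to the
other `n` columns is unique; call its permutation `τₖ` and let `I` be the set of columns with `τₖ`
even. Taking `α` to be the tropical minors (tropical Cramer's rule), in each row `i` the maximum
of `α k + A i k` is attained at a column `k` and also at `k' = τₖ(i)`, whose optimal permutation
is `τₖ` composed with a transposition. So `k` and `k'` lie on opposite sides of `I`. A leading
`ℤ` slot plays the role of `-∞`, and projecting back to `ℝ_max` gives the theorem.
-/

open scoped Classical

noncomputable section

open Finset Equiv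

namespace MaxPlusRadon

theorem sup_eq_sup_compl_of_isMax {ι β : Type*} [Fintype ι] [DecidableEq ι] [SemilatticeSup β]
    [OrderBot β] {f : ι → β} {I : Finset ι} {k k' : ι} (hmax : ∀ l, f l ≤ f k)
    (heq : f k' = f k) (hside : k ∈ I ↔ k' ∉ I) : I.sup f = Iᶜ.sup f := by
  have sup_eq : ∀ {s : Finset ι} {l : ι}, l ∈ s → f l = f k → s.sup f = f k :=
    fun hl hfl => le_antisymm (Finset.sup_le fun l _ => hmax l) (hfl ▸ le_sup hl)
  by_cases hk : k ∈ I
  · rw [sup_eq hk rfl, sup_eq (mem_compl.2 (hside.1 hk)) heq]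
  · rw [sup_eq (not_not.1 (hside.not.1 hk)) heq, sup_eq (mem_compl.2 hk) rfl]

section TropicalCramer

variable {G : Type*} [AddCommMonoid G] {m : ℕ}
  (A : Fin m → Fin (m + 1) → G)

/-- A permutation `τ` with `τ (Fin.last m) = k` encodes the bijection `j ↦ τ j.castSucc` from the
rows onto the columns other than `k`. -/
def permWeight (τ : Perm (Fin (m + 1))) : G := ∑ j, A j (τ j.castSucc)

def IsGeneric : Prop :=
  ∀ τ σ : Perm (Fin (m + 1)), τ (Fin.last m) = σ (Fin.last m) →
    permWeight A τ = permWeight A σ → τ = σ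

theorem permWeight_mul_swap (τ : Perm (Fin (m + 1))) (i : Fin m) :
    permWeight A (τ * swap i.castSucc (Fin.last m)) + A i (τ i.castSucc) =
      permWeight A τ + A i (τ (Fin.last m)) := by
  have hrest : ∀ j ∈ univ.erase i,
      (τ * swap i.castSucc (Fin.last m)) j.castSucc = τ j.castSucc := fun j hj => by
    rw [Perm.mul_apply, swap_apply_of_ne_of_ne (by simpa using ne_of_mem_erase hj)
      (Fin.castSucc_lt_last j).ne]
  rw [permWeight, permWeight, ← add_sum_erase _ _ (mem_univ i), ← add_sum_erase _ _ (mem_univ i),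
    sum_congr rfl fun j hj => congrArg (A j) (hrest j hj), Perm.mul_apply, swap_apply_left]
  abel

variable [LinearOrder G]

theorem exists_optimal_perm (k : Fin (m + 1)) :
    ∃ τ : Perm (Fin (m + 1)), τ (Fin.last m) = k ∧
      ∀ σ : Perm (Fin (m + 1)), σ (Fin.last m) = k → permWeight A σ ≤ permWeight A τ := by
  obtain ⟨τ, hτ, hmax⟩ := exists_max_image (univ.filter fun σ : Perm _ => σ (Fin.last m) = k)
    (permWeight A) ⟨swap (Fin.last m) k, by simp⟩
  exact ⟨τ, (mem_filter.1 hτ).2, fun σ hσ => hmax σ (by simpa using hσ)⟩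

def optPerm (k : Fin (m + 1)) : Perm (Fin (m + 1)) := (exists_optimal_perm A k).choose

theorem optPerm_last (k : Fin (m + 1)) : optPerm A k (Fin.last m) = k :=
  (exists_optimal_perm A k).choose_spec.1

theorem permWeight_le_optPerm {k : Fin (m + 1)} {σ : Perm (Fin (m + 1))}
    (hσ : σ (Fin.last m) = k) : permWeight A σ ≤ permWeight A (optPerm A k) :=
  (exists_optimal_perm A k).choose_spec.2 σ hσ

def tropMinor (k : Fin (m + 1)) : G := permWeight A (optPerm A k)

def cramerSet : Finset (Fin (m + 1)) := univ.filter fun k => Perm.sign (optPerm A k) = 1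

/-- Exchanging `k` with `k' = τₖ i` turns an optimal permutation for column `k` into one for
column `k'`. -/
theorem exists_maximizer_sign_neg [IsOrderedCancelAddMonoid G] (hA : IsGeneric A) (i : Fin m)
    {k : Fin (m + 1)} (hk : ∀ l, tropMinor A l + A i l ≤ tropMinor A k + A i k) :
    ∃ k', tropMinor A k' + A i k' = tropMinor A k + A i k ∧
      Perm.sign (optPerm A k') = -Perm.sign (optPerm A k) := by
  set τ := optPerm A k
  set k' := τ i.castSucc
  set τ' := τ * swap i.castSucc (Fin.last m)
  have hτ'last : τ' (Fin.last m) = k' := by simp [τ', k']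
  have hexchange : permWeight A τ' + A i k' = tropMinor A k + A i k := by
    rw [permWeight_mul_swap, optPerm_last]; rfl
  have hmax : tropMinor A k' + A i k' = tropMinor A k + A i k :=
    le_antisymm (hk k') (hexchange ▸ add_le_add_left (permWeight_le_optPerm A hτ'last) _)
  have hopt : optPerm A k' = τ' :=
    hA _ _ (by rw [optPerm_last, hτ'last]) (add_right_cancel (hmax.trans hexchange.symm))
  refine ⟨k', hmax, ?_⟩
  rw [hopt, Perm.sign_mul, Perm.sign_swap (Fin.castSucc_lt_last i).ne, mul_neg_one]

theorem exists_maximizers_mem_iff_notMem_cramerSet [IsOrderedCancelAddMonoid G] (hA : IsGeneric A)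
    (i : Fin m) :
    ∃ k k', (∀ l, tropMinor A l + A i l ≤ tropMinor A k + A i k) ∧
      tropMinor A k' + A i k' = tropMinor A k + A i k ∧
      (k ∈ cramerSet A ↔ k' ∉ cramerSet A) := by
  obtain ⟨k, hk⟩ := Finite.exists_max fun l => tropMinor A l + A i l
  obtain ⟨k', hmax, hsign⟩ := exists_maximizer_sign_neg A hA i hk
  refine ⟨k, k', hk, hmax, ?_⟩
  simp only [cramerSet, mem_filter, mem_univ, true_and, hsign]
  rcases Int.units_eq_one_or (Perm.sign (optPerm A k)) with h | h <;> simp [h]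

end TropicalCramer

section Perturbation

variable {m : ℕ}

/-- The `ℤ` slot counts (negatively) the entries `-∞` in a sum, the `ℝ` slot carries the max-plus
value, and the last slot is an infinitesimal perturbation breaking ties between permutations. -/
abbrev PerturbedVal (m : ℕ) := ℤ ×ₗ ℝ ×ₗ Lex (Fin m → ℝ)

def perturb (j : Fin m) (k : Fin (m + 1)) : WithBot ℝ → PerturbedVal m
  | ⊥ => toLex (-1, toLex (0, toLex (Pi.single j k)))
  | (x : ℝ) => toLex (0, toLex (x, toLex (Pi.single j k)))

def toWithBot (g : PerturbedVal m) : WithBot ℝ :=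
  if (ofLex g).1 = 0 then ((ofLex (ofLex g).2).1 : WithBot ℝ) else ⊥

def tieBreak : PerturbedVal m →+ (Fin m → ℝ) where
  toFun g := ofLex (ofLex (ofLex g).2).2
  map_zero' := rfl
  map_add' _ _ := rfl

theorem fst_perturb_nonpos (j : Fin m) (k : Fin (m + 1)) (x : WithBot ℝ) :
    (ofLex (perturb j k x)).1 ≤ 0 := by
  cases x <;> simp [perturb]

theorem toWithBot_perturb (j : Fin m) (k : Fin (m + 1)) (x : WithBot ℝ) :
    toWithBot (perturb j k x) = x := by
  cases x <;> simp [perturb, toWithBot]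

theorem tieBreak_perturb (j : Fin m) (k : Fin (m + 1)) (x : WithBot ℝ) :
    tieBreak (perturb j k x) = Pi.single j (k : ℝ) := by
  cases x <;> rfl

theorem toWithBot_zero : toWithBot (0 : PerturbedVal m) = 0 := by
  simp [toWithBot]

theorem toWithBot_add {a b : PerturbedVal m} (ha : (ofLex a).1 ≤ 0) (hb : (ofLex b).1 ≤ 0) :
    toWithBot (a + b) = toWithBot a + toWithBot b := by
  have hsum : (ofLex (a + b)).1 = (ofLex a).1 + (ofLex b).1 := rfl
  by_cases h : (ofLex a).1 = 0 ∧ (ofLex b).1 = 0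
  · simp only [toWithBot, hsum, h, add_zero, if_true]
    rfl
  · have hab : (ofLex a).1 + (ofLex b).1 ≠ 0 := by omega
    rcases not_and_or.1 h with h | h <;> simp [toWithBot, hab, h]

theorem toWithBot_mono {a b : PerturbedVal m} (hb : (ofLex b).1 ≤ 0) (hab : a ≤ b) :
    toWithBot a ≤ toWithBot b := by
  rcases Prod.Lex.le_iff.1 hab with hlt | ⟨heq, hle⟩
  · rw [toWithBot, if_neg (by omega)]
    exact bot_le
  · rw [toWithBot, toWithBot, heq]
    split_ifs
    · exact WithBot.coe_le_coe.2 (Prod.Lex.monotone_fst_ofLex hle)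
    · exact le_rfl

theorem isGeneric_perturb (B : Fin m → Fin (m + 1) → WithBot ℝ) :
    IsGeneric fun j k => perturb j k (B j k) := by
  have htie : ∀ τ : Perm (Fin (m + 1)),
      tieBreak (permWeight (fun j k => perturb j k (B j k)) τ) = fun j => (τ j.castSucc : ℝ) := by
    intro τ
    simp only [permWeight, map_sum, tieBreak_perturb, Finset.univ_sum_single]
  intro τ σ hlast hw
  have hcast : ∀ j : Fin m, τ j.castSucc = σ j.castSucc := by
    have h := congrArg tieBreak hw
    rw [htie, htie] at h
    exact fun j => Fin.val_injective (Nat.cast_injective (congrFun h j))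
  ext x
  induction x using Fin.lastCases with
  | last => rw [hlast]
  | cast j => rw [hcast j]

end Perturbation

end MaxPlusRadon

open MaxPlusRadon in
/-- **Max-plus Radon theorem**: every family of `n+1` vectors in `R_max^n`
(`R_max = (ℝ ∪ {-∞}, max, +)`, modelled by `WithBot ℝ`) is linearly dependent in the
Gondran–Minoux sense: the index set splits into `I` and its complement, with scalars
`α` not all `-∞`, such that `⊕_{k∈I} α_k ⊙ v_k = ⊕_{k∈Iᶜ} α_k ⊙ v_k` entrywise. -/
theorem maxplus_radon {n : ℕ} (v : Fin (n + 1) → Fin n → WithBot ℝ) :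
    ∃ (I : Finset (Fin (n + 1))) (α : Fin (n + 1) → WithBot ℝ),
      (∃ k, α k ≠ ⊥) ∧
      ∀ i : Fin n, (I.sup fun k => α k + v k i) = (Iᶜ.sup fun k => α k + v k i) := by
  set A : Fin n → Fin (n + 1) → PerturbedVal n := fun j k => perturb j k (v k j)
  obtain ⟨k₀, hk₀⟩ := Finite.exists_max (tropMinor A)
  -- Normalizing by the largest minor makes `β k₀ = 0` and keeps every `ℤ` slot nonpositive.
  set β : Fin (n + 1) → PerturbedVal n := fun k => tropMinor A k - tropMinor A k₀
  have hβ : ∀ k, (ofLex (β k)).1 ≤ 0 := fun k =>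
    Prod.Lex.monotone_fst _ (0 : PerturbedVal n) (sub_nonpos.2 (hk₀ k))
  have hterm : ∀ i l, toWithBot (β l) + v l i = toWithBot (β l + A i l) := fun i l => by
    rw [toWithBot_add (hβ l) (fst_perturb_nonpos _ _ _), toWithBot_perturb]
  refine ⟨cramerSet A, fun k => toWithBot (β k), ⟨k₀, by simp [β, toWithBot_zero]⟩, fun i => ?_⟩
  obtain ⟨k, k', hmax, heq, hside⟩ :=
    exists_maximizers_mem_iff_notMem_cramerSet A (isGeneric_perturb _) i
  refine sup_eq_sup_compl_of_isMax (fun l => ?_) ?_ hside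
  · rw [hterm, hterm]
    refine toWithBot_mono (add_nonpos (hβ k) (fst_perturb_nonpos _ _ _)) ?_
    simpa only [β, sub_add_eq_add_sub] using sub_le_sub_right (hmax l) _
  · rw [hterm, hterm]
    simp only [β, sub_add_eq_add_sub, heq]
end
end

section
/- For any matrices A and B over a commutative semiring S, if A = BC is a factorization with B of size m×f and C of size f×n, then any f+1 rows of A over R_max are linearly dependent in the Gondran–Minoux sense; consequently, for any A ∈ M_{m,n}(R_max), the maximal number of Gondran–Minoux independent rows of A is at most the factor rank of A: mr_GM(A) ≤ f(A). -/
open scoped Classical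

noncomputable section

/-- Max-plus matrix product over `R_max = (ℝ ∪ {-∞}, max, +)` (modelled by
`WithBot ℝ`): `(BC)_{ij} = max_l (b_{il} + c_{lj})`. -/
def mpMul {m k n : ℕ} (B : Matrix (Fin m) (Fin k) (WithBot ℝ))
    (C : Matrix (Fin k) (Fin n) (WithBot ℝ)) : Matrix (Fin m) (Fin n) (WithBot ℝ) :=
  fun i j => Finset.univ.sup fun l => B i l + C l j

/-- Gondran–Minoux linear dependence of a family of vectors in `R_max^n`. -/
def GMdep {k n : ℕ} (w : Fin k → Fin n → WithBot ℝ) : Prop :=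
  ∃ (I : Finset (Fin k)) (α : Fin k → WithBot ℝ),
    (∃ j, α j ≠ ⊥) ∧
    ∀ l : Fin n, (I.sup fun j => α j + w j l) = (Iᶜ.sup fun j => α j + w j l)

/-- The maximal row rank of `A` in the Gondran–Minoux sense: the maximal number of
rows of `A` forming a Gondran–Minoux independent family. -/
def gmRowRank {m n : ℕ} (A : Matrix (Fin m) (Fin n) (WithBot ℝ)) : ℕ :=
  sSup {k | ∃ r : Fin k → Fin m, Function.Injective r ∧ ¬ GMdep (fun i => A (r i))}

/-- The factor rank of `A`: the smallest `k` such that `A = BC` with `B` of size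
`m×k` and `C` of size `k×n` (max-plus product). -/
def facRank {m n : ℕ} (A : Matrix (Fin m) (Fin n) (WithBot ℝ)) : ℕ :=
  sInf {k | ∃ (B : Matrix (Fin m) (Fin k) (WithBot ℝ))
    (C : Matrix (Fin k) (Fin n) (WithBot ℝ)), A = mpMul B C}

/-!
Lift each entry `w i l` to the monomial `single (-w i l) 1` (and `⊥` to `0`) in the field `K` of
Hahn series with real exponents. More vectors than coordinates are linearly dependent over `K`,
say `∑ i, c i • v i = 0`. In each coordinate the terms of lowest order must cancel, so among the
indices maximizing `trop (c i) + w i l` (where `trop = -order`) the leading coefficients of the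
`c i` take both signs. Splitting the rows by the sign of the leading coefficient of `c i` gives a
Gondran–Minoux dependence with coefficients `trop (c i)`. Dependence of the rows of `B` passes to
the rows of `BC`, and a factorization of width `facRank A` exists.
-/

open Finset

namespace HahnSeries

section Trop

variable {Γ R : Type*} [AddCommGroup Γ] [LinearOrder Γ]

def trop [Zero R] (x : HahnSeries Γ R) : WithBot Γ := if x = 0 then ⊥ else ↑(-x.order)

def tropLift [Zero R] [One R] : WithBot Γ → HahnSeries Γ R
  | ⊥ => 0
  | (g : Γ) => single (-g) 1

@[simp]
theorem trop_zero [Zero R] : trop (0 : HahnSeries Γ R) = ⊥ := if_pos rfl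

theorem trop_of_ne_zero [Zero R] {x : HahnSeries Γ R} (hx : x ≠ 0) : trop x = ↑(-x.order) :=
  if_neg hx

theorem trop_le_trop_of_order_le [IsOrderedAddMonoid Γ] [Zero R] {x y : HahnSeries Γ R}
    (hy : y ≠ 0) (h : y.order ≤ x.order) : trop x ≤ trop y := by
  rcases eq_or_ne x 0 with rfl | hx
  · simp
  · rw [trop_of_ne_zero hx, trop_of_ne_zero hy]
    exact WithBot.coe_le_coe.mpr (neg_le_neg h)

@[simp]
theorem trop_tropLift [Zero R] [One R] [NeZero (1 : R)] (w : WithBot Γ) :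
    trop (tropLift w : HahnSeries Γ R) = w := by
  cases w with
  | bot => exact trop_zero
  | coe g => simp [tropLift, trop_of_ne_zero (single_ne_zero one_ne_zero)]

theorem leadingCoeff_tropLift [Zero R] [One R] {w : WithBot Γ}
    (hw : (tropLift w : HahnSeries Γ R) ≠ 0) : (tropLift w : HahnSeries Γ R).leadingCoeff = 1 := by
  cases w with
  | bot => exact absurd rfl hw
  | coe g => exact leadingCoeff_of_single

theorem trop_mul [IsOrderedAddMonoid Γ] [Semiring R] [NoZeroDivisors R] (x y : HahnSeries Γ R) :
    trop (x * y) = trop x + trop y := by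
  rcases eq_or_ne x 0 with rfl | hx; · simp
  rcases eq_or_ne y 0 with rfl | hy; · simp
  rw [trop_of_ne_zero (mul_ne_zero hx hy), trop_of_ne_zero hx, trop_of_ne_zero hy,
    order_mul_of_ne_zero (by simp [hx, hy]), neg_add, WithBot.coe_add]

end Trop

variable {ι Γ R : Type*} [Fintype ι] [LinearOrder Γ] [AddCommGroup R] [LinearOrder R]
  [IsOrderedAddMonoid R] {t : ι → HahnSeries Γ R}

theorem exists_order_le_leadingCoeff_neg_of_sum_eq_zero [Zero Γ] (ht : ∑ i, t i = 0) {i : ι}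
    (hi : t i ≠ 0) : ∃ j, t j ≠ 0 ∧ (t j).order ≤ (t i).order ∧ (t j).leadingCoeff < 0 := by
  obtain ⟨i₀, hi₀, hmin⟩ :=
    (univ.filter (t · ≠ 0)).exists_min_image (fun j => (t j).order) ⟨i, by simpa using hi⟩
  have hsum : ∑ j, (t j).coeff (t i₀).order = 0 := by rw [← coeff_sum, ht, coeff_zero]
  obtain ⟨j, -, hj⟩ : ∃ j ∈ univ, (t j).coeff (t i₀).order < 0 := by
    by_contra! h
    exact coeff_order_eq_zero.not.mpr (by simpa using hi₀)
      ((Finset.sum_eq_zero_iff_of_nonneg h).mp hsum i₀ (mem_univ _))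
  have hj₀ : t j ≠ 0 := ne_zero_of_coeff_ne_zero hj.ne
  have hord : (t j).order = (t i₀).order :=
    le_antisymm (order_le_of_coeff_ne_zero hj.ne) (hmin j (by simpa using hj₀))
  exact ⟨j, hj₀, hord ▸ hmin i (by simpa using hi), by rwa [leadingCoeff_eq, hord]⟩

theorem sup_trop_eq_sup_trop_compl [AddCommGroup Γ] [IsOrderedAddMonoid Γ] (ht : ∑ i, t i = 0)
    {I : Finset ι} (hI : ∀ i, t i ≠ 0 → (i ∈ I ↔ 0 < (t i).leadingCoeff)) :
    (I.sup fun i => trop (t i)) = Iᶜ.sup fun i => trop (t i) := by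
  apply le_antisymm
  · refine Finset.sup_le fun i _ => ?_
    rcases eq_or_ne (t i) 0 with h | h
    · simp [h]
    obtain ⟨j, hj, hji, hneg⟩ := exists_order_le_leadingCoeff_neg_of_sum_eq_zero ht h
    have hjI : j ∈ Iᶜ := by simpa [hI j hj] using hneg.le
    exact (trop_le_trop_of_order_le hj hji).trans (le_sup (f := fun i => trop (t i)) hjI)
  · refine Finset.sup_le fun i _ => ?_
    rcases eq_or_ne (t i) 0 with h | h
    · simp [h]
    have ht' : ∑ i, -t i = 0 := by rw [sum_neg_distrib, ht, neg_zero]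
    obtain ⟨j, hj, hji, hneg⟩ :=
      exists_order_le_leadingCoeff_neg_of_sum_eq_zero ht' (neg_ne_zero.mpr h)
    simp only [ne_eq, neg_eq_zero, order_neg, leadingCoeff_neg, neg_neg_iff_pos] at hj hji hneg
    exact (trop_le_trop_of_order_le hj hji).trans
      (le_sup (f := fun i => trop (t i)) ((hI j hj).mpr hneg))

end HahnSeries

open HahnSeries

theorem GMdep_of_lt {k n : ℕ} (h : n < k) (w : Fin k → Fin n → WithBot ℝ) : GMdep w := by
  obtain ⟨c, hc, i₀, hi₀⟩ := Fintype.not_linearIndependent_iff.mp fun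
      hli : LinearIndependent (HahnSeries ℝ ℝ) fun i l => tropLift (w i l) =>
    (hli.fintype_card_le_finrank.trans_eq (Module.finrank_fin_fun _)).not_gt
      (by simpa using h)
  refine ⟨univ.filter fun i => 0 < (c i).leadingCoeff, fun i => trop (c i),
    ⟨i₀, by simp [trop_of_ne_zero hi₀]⟩, fun l => ?_⟩
  have hl : ∑ i, c i * tropLift (w i l) = 0 := by simpa using congrFun hc l
  have := sup_trop_eq_sup_trop_compl hl (I := univ.filter fun i => 0 < (c i).leadingCoeff)
    fun i hi => by simp [leadingCoeff_tropLift (right_ne_zero_of_mul hi)]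
  simpa [trop_mul] using this

theorem WithBot.finset_sup_add {ι α : Type*} [AddCommMonoid α] [LinearOrder α]
    [IsOrderedAddMonoid α] (s : Finset ι) (f : ι → WithBot α) (c : WithBot α) :
    s.sup f + c = s.sup fun i => f i + c :=
  apply_sup_eq_sup_comp_of_linearOrder (· + c) add_left_mono (WithBot.bot_add c)

theorem GMdep.mpMul_right {k f n : ℕ} {B : Matrix (Fin k) (Fin f) (WithBot ℝ)} (hB : GMdep B)
    (C : Matrix (Fin f) (Fin n) (WithBot ℝ)) : GMdep (mpMul B C) := by
  obtain ⟨I, α, hα, hB⟩ := hB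
  refine ⟨I, α, hα, fun l => ?_⟩
  have expand : ∀ S : Finset (Fin k), (S.sup fun j => α j + mpMul B C j l) =
      univ.sup fun t => (S.sup fun j => α j + B j t) + C t l := by
    intro S
    calc (S.sup fun j => α j + mpMul B C j l)
        = S.sup fun j => univ.sup fun t => B j t + C t l + α j := by
          simp only [mpMul, add_comm (α _), WithBot.finset_sup_add]
      _ = univ.sup fun t => S.sup fun j => α j + B j t + C t l := by
          rw [Finset.sup_comm]
          exact sup_congr rfl fun t _ => sup_congr rfl fun j _ => by ac_rfl
      _ = univ.sup fun t => (S.sup fun j => α j + B j t) + C t l := by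
          simp only [WithBot.finset_sup_add]
  rw [expand, expand]
  simp only [hB]

def mpOne (n : ℕ) : Matrix (Fin n) (Fin n) (WithBot ℝ) := fun l j => if l = j then 0 else ⊥

theorem mpMul_mpOne {m n : ℕ} (A : Matrix (Fin m) (Fin n) (WithBot ℝ)) :
    mpMul A (mpOne n) = A := by
  ext i j
  refine le_antisymm (Finset.sup_le fun l _ => ?_) (le_sup_of_le (mem_univ j) (by simp [mpOne]))
  by_cases hl : l = j <;> simp [mpOne, hl]

theorem exists_eq_mpMul_facRank {m n : ℕ} (A : Matrix (Fin m) (Fin n) (WithBot ℝ)) :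
    ∃ (B : Matrix (Fin m) (Fin (facRank A)) (WithBot ℝ))
      (C : Matrix (Fin (facRank A)) (Fin n) (WithBot ℝ)), A = mpMul B C :=
  Nat.sInf_mem (s := {k | ∃ (B : Matrix (Fin m) (Fin k) (WithBot ℝ))
      (C : Matrix (Fin k) (Fin n) (WithBot ℝ)), A = mpMul B C})
    ⟨n, A, mpOne n, (mpMul_mpOne A).symm⟩

/-- If `A = BC` with inner dimension `f`, then any `f+1` rows of `A` are linearly
dependent in the Gondran–Minoux sense; consequently `mr_GM(A) ≤ f(A)`. -/
theorem gmRowRank_le_facRank {m n : ℕ} (A : Matrix (Fin m) (Fin n) (WithBot ℝ)) :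
    (∀ (f : ℕ) (B : Matrix (Fin m) (Fin f) (WithBot ℝ))
        (C : Matrix (Fin f) (Fin n) (WithBot ℝ)), A = mpMul B C →
      ∀ r : Fin (f + 1) → Fin m, Function.Injective r → GMdep (fun i => A (r i))) ∧
    gmRowRank A ≤ facRank A := by
  refine ⟨fun f B C hA r _ => ?_, csSup_le' ?_⟩
  · rw [hA]
    exact (GMdep_of_lt f.lt_succ_self _).mpMul_right C
  · rintro k ⟨r, -, hr⟩
    obtain ⟨B, C, hA⟩ := exists_eq_mpMul_facRank A
    by_contra! hk
    rw [hA] at hr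
    exact hr ((GMdep_of_lt hk _).mpMul_right C)
end
end

section
/- For all matrices A, B ∈ M_{m,n}(R_max), the tropical rank is subadditive: trop(A ⊕ B) ≤ trop(A) + trop(B), where A ⊕ B denotes the entrywise maximum of A and B. -/
open scoped Classical

noncomputable section

/-- A square matrix over `R_max = (ℝ ∪ {-∞}, max, +)` (modelled by `WithBot ℝ`) is
tropically nonsingular if the maximum in its permanent `max_σ Σ_i m_{iσ(i)}` is
finite and attained by exactly one permutation. -/
def TropNonsing {k : ℕ} (M : Matrix (Fin k) (Fin k) (WithBot ℝ)) : Prop :=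
  ∃ σ : Equiv.Perm (Fin k), (∑ i, M i (σ i)) ≠ ⊥ ∧
    ∀ τ : Equiv.Perm (Fin k), τ ≠ σ → (∑ i, M i (τ i)) < ∑ i, M i (σ i)

/-- The tropical rank of `A`: the largest `k` such that `A` has a tropically
nonsingular `k×k` submatrix. -/
def tropRank {m n : ℕ} (A : Matrix (Fin m) (Fin n) (WithBot ℝ)) : ℕ :=
  sSup {k | ∃ (r : Fin k → Fin m) (c : Fin k → Fin n),
    Function.Injective r ∧ Function.Injective c ∧
    TropNonsing (fun a b => A (r a) (c b))}

/-!
If the `k × k` submatrix of `A ⊕ B` on rows `r` and columns `c ∘ σ` has its tropical permanent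
uniquely attained by the diagonal, split the rows according to whether `A` or `B` realises the
diagonal entry. On each part the corresponding principal submatrix of `A` (resp. `B`) is again
uniquely optimised by its diagonal: a better permutation of that part, extended by the identity on
the other part, would beat the diagonal of `A ⊕ B`, because `A, B ≤ A ⊕ B` with equality on the
chosen diagonal entries and the untouched diagonal entries are finite. Hence the two parts have
sizes at most `trop(A)` and `trop(B)`.
-/

def TropNonsingDiag {ι : Type*} [Fintype ι] (M : Matrix ι ι (WithBot ℝ)) : Prop :=
  (∑ i, M i i) ≠ ⊥ ∧ ∀ τ : Equiv.Perm ι, τ ≠ 1 → ∑ i, M i (τ i) < ∑ i, M i i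

namespace TropNonsingDiag

variable {ι : Type*} [Fintype ι] {M : Matrix ι ι (WithBot ℝ)}

lemma diag_ne_bot (h : TropNonsingDiag M) (i : ι) : M i i ≠ ⊥ := fun hi =>
  h.1 (WithBot.sum_eq_bot_iff.2 ⟨i, Finset.mem_univ i, hi⟩)

lemma tropNonsing {k : ℕ} {M : Matrix (Fin k) (Fin k) (WithBot ℝ)} (h : TropNonsingDiag M) :
    TropNonsing M :=
  ⟨1, h⟩

lemma submatrix_equiv {κ : Type*} [Fintype κ] (h : TropNonsingDiag M) (e : κ ≃ ι) :
    TropNonsingDiag (M.submatrix e e) := by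
  have hsum : ∀ τ : Equiv.Perm κ,
      ∑ a, M.submatrix e e a (τ a) = ∑ i, M i (e.permCongr τ i) := fun τ => by
    simpa using e.sum_comp fun i => M i (e.permCongr τ i)
  have hdiag : ∑ a, M.submatrix e e a a = ∑ i, M i i := e.sum_comp fun i => M i i
  refine ⟨hdiag ▸ h.1, fun τ hτ => ?_⟩
  have hτ' : e.permCongr τ ≠ 1 := fun h1 => hτ (e.permCongr.injective (h1.trans (by ext; simp)))
  rw [hdiag, hsum]
  exact h.2 _ hτ'

lemma submatrix_subtype_of_le (h : TropNonsingDiag M) {D : Matrix ι ι (WithBot ℝ)}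
    (hDM : ∀ i j, D i j ≤ M i j) (p : ι → Prop) [DecidablePred p]
    (hdiag : ∀ i, p i → D i i = M i i) :
    TropNonsingDiag (D.submatrix ((↑) : {i // p i} → ι) (↑)) := by
  refine ⟨fun hbot => ?_, fun τ hτ => ?_⟩
  · obtain ⟨i, -, hi⟩ := WithBot.sum_eq_bot_iff.1 hbot
    exact h.diag_ne_bot i ((hdiag i i.2).symm.trans hi)
  have hrest_ne_bot : ∑ i : {i // ¬p i}, M i i ≠ ⊥ := fun hbot => by
    obtain ⟨i, -, hi⟩ := WithBot.sum_eq_bot_iff.1 hbot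
    exact h.diag_ne_bot i hi
  have hsplit : ∑ i, M i (Equiv.Perm.ofSubtype τ i) =
      ∑ i : {i // p i}, M i (τ i) + ∑ i : {i // ¬p i}, M i i := by
    rw [← Fintype.sum_subtype_add_sum_subtype p]
    congr 1
    · exact Finset.sum_congr rfl fun i _ => by rw [Equiv.Perm.ofSubtype_apply_coe]
    · exact Finset.sum_congr rfl fun i _ => by rw [Equiv.Perm.ofSubtype_apply_of_not_mem τ i.2]
  have hlt : ∑ i : {i // p i}, M i (τ i) < ∑ i : {i // p i}, M i i := by
    rw [← WithBot.add_lt_add_iff_right hrest_ne_bot, ← hsplit,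
      Fintype.sum_subtype_add_sum_subtype p fun i => M i i]
    exact h.2 _ fun h1 => hτ (Equiv.Perm.ofSubtype_injective (h1.trans (map_one _).symm))
  calc ∑ i : {i // p i}, D i (τ i) ≤ ∑ i : {i // p i}, M i (τ i) :=
        Finset.sum_le_sum fun i _ => hDM i (τ i)
    _ < ∑ i : {i // p i}, M i i := hlt
    _ = ∑ i : {i // p i}, D i i := Finset.sum_congr rfl fun i _ => (hdiag i i.2).symm

end TropNonsingDiag

lemma TropNonsing.exists_tropNonsingDiag {k : ℕ} {M : Matrix (Fin k) (Fin k) (WithBot ℝ)}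
    (h : TropNonsing M) : ∃ σ : Equiv.Perm (Fin k), TropNonsingDiag (M.submatrix id σ) := by
  obtain ⟨σ, hfin, hmax⟩ := h
  refine ⟨σ, hfin, fun τ hτ => ?_⟩
  simpa only [Matrix.submatrix_apply, id, Equiv.Perm.mul_apply] using
    hmax (σ * τ) fun h => hτ (mul_left_cancel (h.trans (mul_one σ).symm))

lemma card_le_tropRank {m n : ℕ} (A : Matrix (Fin m) (Fin n) (WithBot ℝ)) {κ : Type*}
    [Fintype κ] {r : κ → Fin m} {c : κ → Fin n} (hr : Function.Injective r)
    (hc : Function.Injective c) (h : TropNonsingDiag (A.submatrix r c)) :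
    Fintype.card κ ≤ tropRank A := by
  let e := (Fintype.equivFin κ).symm
  refine le_csSup ⟨m, ?_⟩
    ⟨r ∘ e, c ∘ e, hr.comp e.injective, hc.comp e.injective, (h.submatrix_equiv e).tropNonsing⟩
  rintro k ⟨r, -, hr, -⟩
  simpa using Fintype.card_le_of_injective r hr

/-- Subadditivity of the tropical rank: `trop(A ⊕ B) ≤ trop(A) + trop(B)`, where
`A ⊕ B` is the entrywise maximum. -/
theorem tropRank_subadditive {m n : ℕ} (A B : Matrix (Fin m) (Fin n) (WithBot ℝ)) :
    tropRank (fun i j => A i j ⊔ B i j) ≤ tropRank A + tropRank B := by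
  refine csSup_le' fun k ⟨r, c, hr, hc, hk⟩ => ?_
  obtain ⟨σ, hσ⟩ := hk.exists_tropNonsingDiag
  have hc' : Function.Injective (c ∘ σ) := hc.comp σ.injective
  let p i := B (r i) (c (σ i)) ≤ A (r i) (c (σ i))
  have hA : Fintype.card {i // p i} ≤ tropRank A :=
    card_le_tropRank A (hr.comp Subtype.val_injective) (hc'.comp Subtype.val_injective) <|
      hσ.submatrix_subtype_of_le (D := A.submatrix r (c ∘ σ)) (fun _ _ => le_sup_left) p
        fun _ hi => (sup_eq_left.2 hi).symm
  have hB : Fintype.card {i // ¬p i} ≤ tropRank B :=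
    card_le_tropRank B (hr.comp Subtype.val_injective) (hc'.comp Subtype.val_injective) <|
      hσ.submatrix_subtype_of_le (D := B.submatrix r (c ∘ σ)) (fun _ _ => le_sup_right) (¬p ·)
        fun _ hi => (sup_eq_right.2 (le_of_not_ge hi)).symm
  calc k = Fintype.card {i // p i} + Fintype.card {i // ¬p i} := by
        rw [Fintype.card_subtype_compl, Nat.add_sub_of_le (Fintype.card_subtype_le p),
          Fintype.card_fin]
    _ ≤ tropRank A + tropRank B := add_le_add hA hB
end
end
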